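/- The set of graded gentle trees with n vertices is closed under forward and backward mutation: for any graded gentle tree G with n vertices and any vertex V, both μ_V(G) and μ_V^{-1}(G) are again graded gentle trees with n vertices. -/

import Mathlib

open CategoryTheory

/-- A graded 2-colored quiver on vertex set `Fin n`: a set of arrows, where an arrow
is a triple (source, target, color), together with a grading (degree) function on arrows. -/
structure GCQuiver (n : ℕ) where
  arr : Set (Fin n × Fin n × Bool)
  deg : Fin n × Fin n × Bool → ℕ

namespace GCQuiver

variable {n : ℕ}

/-- The underlying (undirected, uncolored) simple graph of a graded colored quiver. -/
def adj (G : GCQuiver n) : SimpleGraph (Fin n) where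
  Adj i j := i ≠ j ∧ ∃ c, ((i, j, c) ∈ G.arr ∨ (j, i, c) ∈ G.arr)
  symm := by
    constructor
    intro i j h
    exact ⟨Ne.symm h.1, by obtain ⟨c, hc⟩ := h.2; exact ⟨c, hc.symm⟩⟩
  loopless := by constructor; intro i h; exact h.1 rfl

/-- A graded gentle tree: the underlying graph is a tree (in particular there is
at most one arrow between any two vertices, which is forced by `tree` together with
`card_arr`), each vertex has at most one incoming and at most one outgoing arrow of
each color, and all degrees of arrows are positive. -/
structure IsGGTree (G : GCQuiver n) : Prop where
  no_loop : ∀ i c, (i, i, c) ∉ G.arr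
  tree : G.adj.IsTree
  card_arr : G.arr.ncard = n - 1
  out_unique : ∀ i c j j', (i, j, c) ∈ G.arr → (i, j', c) ∈ G.arr → j = j'
  in_unique : ∀ j c i i', (i, j, c) ∈ G.arr → (i', j, c) ∈ G.arr → i = i'
  deg_pos : ∀ a ∈ G.arr, 1 ≤ G.deg a

/-- Monochromatic (unicolored) directed paths in a graded colored quiver:
`MonoPath G i j c d` holds iff there is a directed path from `i` to `j` all of whose
arrows have color `c`, of total grading `d`. -/
inductive MonoPath (G : GCQuiver n) : Fin n → Fin n → Bool → ℕ → Prop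
  | single {i j : Fin n} {c : Bool} (h : (i, j, c) ∈ G.arr) :
      MonoPath G i j c (G.deg (i, j, c))
  | cons {i j l : Fin n} {c : Bool} {d : ℕ} (h : (i, j, c) ∈ G.arr)
      (p : MonoPath G j l c d) : MonoPath G i l c (G.deg (i, j, c) + d)

/-- The associated (positively) graded quiver of a graded gentle tree: it has an arrow
`i → j` of degree `d` iff there is a monochromatic directed path `i → j` of total
grading `d`.  (In a gentle tree there is at most one such path between any two
vertices, so recording existence records the quiver faithfully.) -/
def assocQuiver (G : GCQuiver n) : Fin n → Fin n → ℕ → Prop :=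
  fun i j d => ∃ c, MonoPath G i j c d

end GCQuiver

namespace GCQuiver

variable {n : ℕ}

/-- `re G V c w` : the forward mutation of `G` at `V` involves a reattachment for the
color pair headed by the incoming arrow of color `c`, which is the degree-one arrow
`w → V`. -/
def re (G : GCQuiver n) (V : Fin n) (c : Bool) (w : Fin n) : Prop :=
  (w, V, c) ∈ G.arr ∧ G.deg (w, V, c) = 1

/-- Adjacency in the underlying graph of `G`, avoiding the edge `{w, V}` as well as the
edge supporting the incoming arrow of color `c` at `w` (the `L₁`-arrow). -/
def adjAvoid (G : GCQuiver n) (V w : Fin n) (c : Bool) (a b : Fin n) : Prop :=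
  (∃ d, (a, b, d) ∈ G.arr ∨ (b, a, d) ∈ G.arr) ∧
  ¬(a = w ∧ b = V) ∧ ¬(a = V ∧ b = w) ∧
  ¬((a, b, c) ∈ G.arr ∧ b = w) ∧ ¬((b, a, c) ∈ G.arr ∧ a = w)

/-- The region (set of vertices) on which colors are swapped during the reattachment
at `(c, w)`: the connected component of `w` after removing the mutated degree-one arrow
`w → V` and the incoming arrow of color `c` at `w`; this is `{w} ∪ E₁ ∪ E₂` in the
notation of the paper. -/
def swapRegion (G : GCQuiver n) (V w : Fin n) (c : Bool) : Set (Fin n) :=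
  {u | Relation.ReflTransGen (adjAvoid G V w c) w u}

/-- The arrows between two vertices `a`, `b` get their color flipped by the forward
mutation at `V` iff both `a` and `b` belong to a swap region of a reattachment. -/
def flips (G : GCQuiver n) (V : Fin n) (a b : Fin n) : Prop :=
  ∃ c w, re G V c w ∧ a ∈ swapRegion G V w c ∧ b ∈ swapRegion G V w c

open Classical in
/-- The forward mutation `μ_V` of a graded (2-)colored quiver at the vertex `V`,
following rule (2.1) of the paper and its mirror rule, simultaneously for both
color pairs at `V`:
* each incoming arrow at `V` of degree `> 1` has its degree decreased by `1`, and
  each outgoing arrow at `V` (whose color pair contains no reattachment)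
  has its degree increased by `1`;
* each incoming arrow `α : w → V` (of a color `c`) of degree `1` is reversed into an
  arrow `V → w` of degree `1` and of the other color; the outgoing arrow `V → r` of
  the other color is reattached to become `w → r` (same color, same degree); the
  incoming arrow `l → w` of color `c` is reattached to become `l → V` (same color,
  same degree); and the two remaining subtrees at `w` have all their colors swapped
  (including their connecting arrows at `w`). -/
noncomputable def mutate (G : GCQuiver n) (V : Fin n) : GCQuiver n where
  arr := {e |
    (∃ d₀, (e.1, e.2.1, d₀) ∈ G.arr ∧
       ¬(e.2.1 = V ∧ re G V d₀ e.1) ∧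
       ¬(e.1 = V ∧ ∃ w, re G V (!d₀) w) ∧
       ¬(∃ w, re G V d₀ w ∧ e.2.1 = w) ∧
       e.2.2 = (if flips G V e.1 e.2.1 then !d₀ else d₀)) ∨
    (e.1 = V ∧ re G V (!e.2.2) e.2.1) ∨
    (re G V (!e.2.2) e.1 ∧ (V, e.2.1, e.2.2) ∈ G.arr) ∨
    (e.2.1 = V ∧ ∃ w, re G V e.2.2 w ∧ (e.1, w, e.2.2) ∈ G.arr)}
  deg := fun e =>
    if e.1 = V ∧ re G V (!e.2.2) e.2.1 then 1
    else if re G V (!e.2.2) e.1 ∧ (V, e.2.1, e.2.2) ∈ G.arr then G.deg (V, e.2.1, e.2.2)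
    else if h : e.2.1 = V ∧ ∃ w, re G V e.2.2 w ∧ (e.1, w, e.2.2) ∈ G.arr then
      G.deg (e.1, h.2.choose, e.2.2)
    else if flips G V e.1 e.2.1 ∧ (e.1, e.2.1, !e.2.2) ∈ G.arr then
      G.deg (e.1, e.2.1, !e.2.2)
    else if e.2.1 = V then G.deg e - 1
    else if e.1 = V then G.deg e + 1
    else G.deg e

/-- Two graded colored quivers are the same if they have the same arrows with the
same degrees (the degree function being irrelevant away from the arrows). -/
def Same (G G' : GCQuiver n) : Prop :=
  G.arr = G'.arr ∧ ∀ a ∈ G.arr, G.deg a = G'.deg a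


end GCQuiver


/-!
The backward mutation at `V` is `rev ∘ μ_V ∘ rev`, so the theorem reduces to two facts about a
graded gentle tree `G`: `μ_V G` is again one, and `μ_V (rev (μ_V G)) = rev G`. Uniqueness of
the backward mutation follows, since `μ_V` respects equality of graded quivers.

Everything rests on the swap regions at `V`. They are disjoint, avoid `V` and every neighbour of
`V` except `w`, and the only arrows leaving the region of `w` are `w → V` and the arrow into `w`
of the same color, both of which the mutation removes. Hence a retained arrow is recolored iff
either of its endpoints lies in a swap region. This turns the gentleness of `μ_V G` into a finite
case check, and it shows that `rev (μ_V G)` has the same swap regions as `G`. The underlying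
graph of `μ_V G` stays connected and `μ_V G` has at most as many arrows as `G`, so it is again a
tree with `n - 1` arrows.
-/

namespace SimpleGraph

variable {V : Type*} {G H : SimpleGraph V}

lemma IsAcyclic.not_reachable_deleteEdges (hG : G.IsAcyclic) {u v : V} (h : G.Adj u v) :
    ¬(G.deleteEdges {s(u, v)}).Reachable u v :=
  isBridge_iff.mp (isAcyclic_iff_forall_adj_isBridge.mp hG h)

lemma IsAcyclic.not_adj_of_adj_of_adj (hG : G.IsAcyclic) {v x y : V} (hx : G.Adj v x)
    (hy : G.Adj v y) (hxy : x ≠ y) : ¬G.Adj x y := fun h => by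
  refine hG.not_reachable_deleteEdges hx ((Adj.reachable (v := y) ?_).trans (Adj.reachable ?_))
  · exact deleteEdges_adj.mpr ⟨hy, by simp [hxy.symm, hy.ne.symm]⟩
  · exact deleteEdges_adj.mpr ⟨h.symm, by simp [hxy.symm, hy.ne.symm]⟩

lemma Connected.of_adj_reachable (hG : G.Connected) (h : ∀ u v, G.Adj u v → H.Reachable u v) :
    H.Connected := by
  refine (connected_iff H).mpr ⟨fun u v => ?_, hG.nonempty⟩
  induction (reachable_iff_reflTransGen u v).mp (hG.preconnected u v) with
  | refl => rfl
  | tail _ hxy ih => exact ih.trans (h _ _ hxy)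

lemma isTree_iff_connected_and_ncard [Finite V] :
    G.IsTree ↔ G.Connected ∧ G.edgeSet.ncard + 1 = Nat.card V := by
  rw [isTree_iff_connected_and_card, Nat.card_coe_set_eq]

lemma Connected.isTree_of_ncard_edgeSet_le [Finite V] (hG : G.Connected)
    (h : G.edgeSet.ncard + 1 ≤ Nat.card V) : G.IsTree := by
  have := hG.card_vert_le_card_edgeSet_add_one
  rw [Nat.card_coe_set_eq] at this
  exact isTree_iff_connected_and_ncard.mpr ⟨hG, by omega⟩

end SimpleGraph

namespace GCQuiver

open SimpleGraph

variable {n : ℕ}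

theorem Same.symm {G H : GCQuiver n} (h : G.Same H) : H.Same G :=
  ⟨h.1.symm, fun a ha => (h.2 a (h.1 ▸ ha)).symm⟩

theorem Same.trans {G H K : GCQuiver n} (h : G.Same H) (h' : H.Same K) : G.Same K :=
  ⟨h.1.trans h'.1, fun a ha => (h.2 a ha).trans (h'.2 a (h.1 ▸ ha))⟩

def rev (G : GCQuiver n) : GCQuiver n where
  arr := {e | (e.2.1, e.1, e.2.2) ∈ G.arr}
  deg e := G.deg (e.2.1, e.1, e.2.2)

@[simp] lemma rev_rev (G : GCQuiver n) : G.rev.rev = G := rfl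

lemma adj_rev (G : GCQuiver n) : G.rev.adj = G.adj := by
  ext i j
  constructor <;> rintro ⟨hne, c, hc | hc⟩ <;> exact ⟨hne, c, by tauto⟩

lemma Same.rev {G H : GCQuiver n} (h : G.Same H) : G.rev.Same H.rev :=
  ⟨by ext; simp [GCQuiver.rev, h.1], fun _ ha => h.2 _ ha⟩

lemma IsGGTree.rev {G : GCQuiver n} (hG : G.IsGGTree) : G.rev.IsGGTree where
  no_loop i c := hG.no_loop i c
  tree := by rw [adj_rev]; exact hG.tree
  card_arr := by
    have hswap : Function.Involutive fun e : Fin n × Fin n × Bool => (e.2.1, e.1, e.2.2) :=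
      fun _ => rfl
    rw [← hG.card_arr, ← Set.ncard_image_of_injective _ hswap.injective,
      hswap.image_eq_preimage_symm]
    rfl
  out_unique i c j j' := hG.in_unique i c j j'
  in_unique j c i i' := hG.out_unique j c i i'
  deg_pos _ ha := hG.deg_pos _ ha

lemma edgeSet_adj_eq_image {G : GCQuiver n} (hnl : ∀ i c, (i, i, c) ∉ G.arr) :
    G.adj.edgeSet = (fun e : Fin n × Fin n × Bool => s(e.1, e.2.1)) '' G.arr := by
  ext ⟨x, y⟩
  simp only [mem_edgeSet, Set.mem_image]
  constructor
  · rintro ⟨-, c, hc | hc⟩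
    · exact ⟨(x, y, c), hc, rfl⟩
    · exact ⟨(y, x, c), hc, Sym2.eq_swap⟩
  · rintro ⟨⟨a, b, c⟩, hab, he⟩
    have hne : a ≠ b := fun h => hnl a c (h ▸ hab)
    rcases Sym2.eq_iff.mp he with ⟨rfl, rfl⟩ | ⟨rfl, rfl⟩
    exacts [⟨hne, c, Or.inl hab⟩, ⟨hne.symm, c, Or.inr hab⟩]

namespace IsGGTree

variable {G : GCQuiver n} (hG : G.IsGGTree) {a b : Fin n} {c : Bool}
include hG

lemma ne_of_mem (h : (a, b, c) ∈ G.arr) : a ≠ b := fun hab => hG.no_loop b c (hab ▸ h)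

lemma adj_of_mem (h : (a, b, c) ∈ G.arr) : G.adj.Adj a b := ⟨hG.ne_of_mem h, c, Or.inl h⟩

lemma ncard_edgeSet : G.adj.edgeSet.ncard = n - 1 := by
  have := (isTree_iff_connected_and_ncard.mp hG.tree).2
  rw [Nat.card_fin] at this
  omega

/-- One arrow per edge, since the tree has as many edges as `G` has arrows. -/
lemma eq_of_sym2_eq {e e' : Fin n × Fin n × Bool} (he : e ∈ G.arr) (he' : e' ∈ G.arr)
    (h : s(e.1, e.2.1) = s(e'.1, e'.2.1)) : e = e' := by
  refine Set.injOn_of_ncard_image_eq (f := fun e => s(e.1, e.2.1)) ?_ (Set.toFinite _) he he' h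
  rw [← edgeSet_adj_eq_image hG.no_loop, hG.ncard_edgeSet, hG.card_arr]

lemma color_eq {c' : Bool} (h : (a, b, c) ∈ G.arr) (h' : (a, b, c') ∈ G.arr) : c = c' :=
  congrArg (·.2.2) (hG.eq_of_sym2_eq h h' rfl)

lemma not_mem_swap {c' : Bool} (h : (a, b, c) ∈ G.arr) : (b, a, c') ∉ G.arr := fun h' =>
  hG.ne_of_mem h (congrArg (·.1) (hG.eq_of_sym2_eq h h' Sym2.eq_swap))

end IsGGTree

section SwapRegion

variable {G : GCQuiver n} {V w u : Fin n} {c : Bool}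

lemma mem_swapRegion_iff :
    u ∈ swapRegion G V w c ↔ Relation.ReflTransGen (adjAvoid G V w c) w u := Iff.rfl

lemma adj_of_adjAvoid (hG : G.IsGGTree) {a b : Fin n} (h : adjAvoid G V w c a b) :
    G.adj.Adj a b := by
  obtain ⟨⟨d, hd | hd⟩, -⟩ := h
  exacts [hG.adj_of_mem hd, (hG.adj_of_mem hd).symm]

lemma reachable_deleteEdges_of_mem_swapRegion (hG : G.IsGGTree) {e : Sym2 (Fin n)}
    (he : ∀ a b, a ∈ swapRegion G V w c → b ∈ swapRegion G V w c →
      adjAvoid G V w c a b → s(a, b) ≠ e)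
    (hu : u ∈ swapRegion G V w c) : (G.adj.deleteEdges {e}).Reachable w u := by
  induction mem_swapRegion_iff.mp hu with
  | refl => rfl
  | @tail x y hx hxy ih =>
    exact (ih hx).trans
      (deleteEdges_adj.mpr ⟨adj_of_adjAvoid hG hxy, he x y hx (hx.tail hxy) hxy⟩).reachable

lemma reachable_deleteEdges_re_of_mem_swapRegion (hG : G.IsGGTree) (hu : u ∈ swapRegion G V w c) :
    (G.adj.deleteEdges {s(w, V)}).Reachable w u := by
  refine reachable_deleteEdges_of_mem_swapRegion hG ?_ hu
  rintro a b - - ⟨-, h1, h2, -⟩ hab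
  rcases Sym2.eq_iff.mp hab with ⟨rfl, rfl⟩ | ⟨rfl, rfl⟩
  exacts [h1 ⟨rfl, rfl⟩, h2 ⟨rfl, rfl⟩]

lemma ne_of_mem_swapRegion (hG : G.IsGGTree) (hre : re G V c w) (hu : u ∈ swapRegion G V w c) :
    u ≠ V := by
  rintro rfl
  exact hG.tree.isAcyclic.not_reachable_deleteEdges (hG.adj_of_mem hre.1)
    (reachable_deleteEdges_re_of_mem_swapRegion hG hu)

lemma not_adj_of_mem_swapRegion (hG : G.IsGGTree) (hre : re G V c w)
    (hu : u ∈ swapRegion G V w c) (huw : u ≠ w) : ¬G.adj.Adj u V := fun h => by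
  have huV := ne_of_mem_swapRegion hG hre hu
  refine hG.tree.isAcyclic.not_reachable_deleteEdges (hG.adj_of_mem hre.1)
    ((reachable_deleteEdges_re_of_mem_swapRegion hG hu).trans
      (deleteEdges_adj.mpr ⟨h, ?_⟩).reachable)
  simp [huw, huV]

/-- The two swap regions at `V` are disjoint. -/
lemma eq_of_mem_swapRegion (hG : G.IsGGTree) {c' : Bool} {w' : Fin n} (hre : re G V c w)
    (hre' : re G V c' w') (hu : u ∈ swapRegion G V w c) (hu' : u ∈ swapRegion G V w' c') :
    c = c' ∧ w = w' := by
  obtain rfl : w = w' := by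
    by_contra hne
    have hw'u : (G.adj.deleteEdges {s(w, V)}).Reachable w' u := by
      refine reachable_deleteEdges_of_mem_swapRegion hG ?_ hu'
      intro a b ha hb _ hab
      rcases Sym2.eq_iff.mp hab with ⟨-, rfl⟩ | ⟨rfl, -⟩
      exacts [ne_of_mem_swapRegion hG hre' hb rfl, ne_of_mem_swapRegion hG hre' ha rfl]
    have hw'V : (G.adj.deleteEdges {s(w, V)}).Adj w' V :=
      deleteEdges_adj.mpr ⟨hG.adj_of_mem hre'.1, by simp [Ne.symm hne, hG.ne_of_mem hre'.1]⟩
    exact hG.tree.isAcyclic.not_reachable_deleteEdges (hG.adj_of_mem hre.1)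
      (((reachable_deleteEdges_re_of_mem_swapRegion hG hu).trans hw'u.symm).trans hw'V.reachable)
  exact ⟨hG.color_eq hre.1 hre'.1, rfl⟩

lemma not_mem_swapRegion_of_mem (hG : G.IsGGTree) {l : Fin n} (hl : (l, w, c) ∈ G.arr) :
    l ∉ swapRegion G V w c := fun hlR => by
  refine hG.tree.isAcyclic.not_reachable_deleteEdges (hG.adj_of_mem hl).symm
    (reachable_deleteEdges_of_mem_swapRegion hG ?_ hlR)
  rintro a b - - ⟨⟨d, hd | hd⟩, -, -, h4, h5⟩ hab
  · have := hG.eq_of_sym2_eq hd hl (hab.trans Sym2.eq_swap)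
    simp only [Prod.mk.injEq] at this
    obtain ⟨rfl, rfl, rfl⟩ := this
    exact h4 ⟨hd, rfl⟩
  · have := hG.eq_of_sym2_eq hd hl (Sym2.eq_swap.trans (hab.trans Sym2.eq_swap))
    simp only [Prod.mk.injEq] at this
    obtain ⟨rfl, rfl, rfl⟩ := this
    exact h5 ⟨hd, rfl⟩

lemma mem_swapRegion_of_arrow_out (hG : G.IsGGTree) (hre : re G V c w)
    (hu : u ∈ swapRegion G V w c) {x : Fin n} {d : Bool} (h : (u, x, d) ∈ G.arr) :
    x ∈ swapRegion G V w c ∨ (u = w ∧ x = V ∧ d = c) := by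
  by_cases hwV : u = w ∧ x = V
  · obtain ⟨rfl, rfl⟩ := hwV
    exact Or.inr ⟨rfl, rfl, hG.color_eq h hre.1⟩
  by_cases hxw : x = w
  · exact Or.inl (hxw ▸ Relation.ReflTransGen.refl)
  refine Or.inl (Relation.ReflTransGen.tail hu ⟨⟨d, Or.inl h⟩, hwV, ?_, ?_, ?_⟩)
  · rintro ⟨rfl, -⟩
    exact ne_of_mem_swapRegion hG hre hu rfl
  · rintro ⟨-, rfl⟩
    exact hxw rfl
  · rintro ⟨h', -⟩
    exact hG.not_mem_swap h h'

lemma mem_swapRegion_of_arrow_in (hG : G.IsGGTree) (hre : re G V c w)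
    (hu : u ∈ swapRegion G V w c) {x : Fin n} {d : Bool} (h : (x, u, d) ∈ G.arr) :
    x ∈ swapRegion G V w c ∨ (u = w ∧ d = c) := by
  by_cases hwc : u = w ∧ d = c
  · exact Or.inr hwc
  refine Or.inl (Relation.ReflTransGen.tail hu ⟨⟨d, Or.inr h⟩, ?_, ?_, ?_, ?_⟩)
  · rintro ⟨rfl, rfl⟩
    exact hG.not_mem_swap h hre.1
  · rintro ⟨rfl, -⟩
    exact ne_of_mem_swapRegion hG hre hu rfl
  · rintro ⟨h', -⟩
    exact hG.not_mem_swap h h'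
  · rintro ⟨h', rfl⟩
    exact hwc ⟨rfl, hG.color_eq h h'⟩

end SwapRegion

def InSwapRegion (G : GCQuiver n) (V u : Fin n) : Prop :=
  ∃ c w, re G V c w ∧ u ∈ swapRegion G V w c

section InSwapRegion

variable {G : GCQuiver n} {V w u : Fin n} {c : Bool}

lemma InSwapRegion.of_re (h : re G V c w) : InSwapRegion G V w :=
  ⟨c, w, h, Relation.ReflTransGen.refl⟩

lemma not_inSwapRegion_self (hG : G.IsGGTree) : ¬InSwapRegion G V V :=
  fun ⟨_, _, hre, hV⟩ => ne_of_mem_swapRegion hG hre hV rfl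

lemma not_inSwapRegion_of_mem_of_re (hG : G.IsGGTree) (hre : re G V c w)
    (h : (u, w, c) ∈ G.arr) : ¬InSwapRegion G V u := by
  rintro ⟨c₀, w₀, hre₀, hu⟩
  rcases mem_swapRegion_of_arrow_out hG hre₀ hu h with hw | ⟨-, hwV, -⟩
  · obtain ⟨rfl, rfl⟩ := eq_of_mem_swapRegion hG hre₀ hre hw Relation.ReflTransGen.refl
    exact not_mem_swapRegion_of_mem hG h hu
  · exact hG.ne_of_mem hre.1 hwV

lemma not_inSwapRegion_of_mem_from_V (hG : G.IsGGTree) (h : (V, u, c) ∈ G.arr) :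
    ¬InSwapRegion G V u := by
  rintro ⟨c₀, w₀, hre₀, hu⟩
  by_cases huw : u = w₀
  · subst huw
    exact hG.not_mem_swap h hre₀.1
  · exact not_adj_of_mem_swapRegion hG hre₀ hu huw (hG.adj_of_mem h).symm

lemma not_flips_left (hG : G.IsGGTree) : ¬flips G V V u :=
  fun ⟨c, w, hre, hV, _⟩ => not_inSwapRegion_self hG ⟨c, w, hre, hV⟩

lemma not_flips_right (hG : G.IsGGTree) : ¬flips G V u V :=
  fun ⟨c, w, hre, _, hV⟩ => not_inSwapRegion_self hG ⟨c, w, hre, hV⟩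

end InSwapRegion

/-- The arrows of `G` that `mutate G V` keeps between the same two vertices, possibly
recolored. -/
def Retained (G : GCQuiver n) (V a b : Fin n) (d : Bool) : Prop :=
  (a, b, d) ∈ G.arr ∧ ¬(b = V ∧ re G V d a) ∧ ¬(a = V ∧ ∃ w, re G V (!d) w) ∧
    ¬∃ w, re G V d w ∧ b = w

namespace Retained

variable {G : GCQuiver n} {V a b : Fin n} {d : Bool}

lemma mem_swapRegion_iff (hG : G.IsGGTree) (h : Retained G V a b d) {c : Bool} {w : Fin n}
    (hre : re G V c w) : a ∈ swapRegion G V w c ↔ b ∈ swapRegion G V w c := by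
  constructor
  · intro ha
    rcases mem_swapRegion_of_arrow_out hG hre ha h.1 with hb | ⟨rfl, rfl, rfl⟩
    exacts [hb, absurd ⟨rfl, hre⟩ h.2.1]
  · intro hb
    rcases mem_swapRegion_of_arrow_in hG hre hb h.1 with ha | ⟨rfl, rfl⟩
    exacts [ha, absurd ⟨_, hre, rfl⟩ h.2.2.2]

lemma flips_iff_left (hG : G.IsGGTree) (h : Retained G V a b d) :
    flips G V a b ↔ InSwapRegion G V a :=
  ⟨fun ⟨c, w, hre, ha, _⟩ => ⟨c, w, hre, ha⟩,
    fun ⟨c, w, hre, ha⟩ => ⟨c, w, hre, ha, (h.mem_swapRegion_iff hG hre).mp ha⟩⟩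

lemma flips_iff_right (hG : G.IsGGTree) (h : Retained G V a b d) :
    flips G V a b ↔ InSwapRegion G V b :=
  ⟨fun ⟨c, w, hre, _, hb⟩ => ⟨c, w, hre, hb⟩,
    fun ⟨c, w, hre, hb⟩ => ⟨c, w, hre, (h.mem_swapRegion_iff hG hre).mpr hb, hb⟩⟩

end Retained

section MutateArrows

variable {G : GCQuiver n} {V : Fin n} {a b w : Fin n} {γ : Bool}

open Classical in
noncomputable def recolor (G : GCQuiver n) (V a b : Fin n) (γ : Bool) : Bool :=
  if flips G V a b then !γ else γ

lemma recolor_of_flips (h : flips G V a b) : recolor G V a b γ = !γ := if_pos h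

lemma recolor_of_not_flips (h : ¬flips G V a b) : recolor G V a b γ = γ := if_neg h

lemma recolor_eq_recolor {G' : GCQuiver n} {V' a' b' : Fin n}
    (h : flips G V a b ↔ flips G' V' a' b') : recolor G V a b γ = recolor G' V' a' b' γ := by
  by_cases hf : flips G V a b
  · rw [recolor_of_flips hf, recolor_of_flips (h.mp hf)]
  · rw [recolor_of_not_flips hf, recolor_of_not_flips (mt h.mpr hf)]

@[simp] lemma recolor_recolor : recolor G V a b (recolor G V a b γ) = γ := by
  by_cases h : flips G V a b <;> simp [recolor_of_flips, recolor_of_not_flips, h]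

/-- The four kinds of arrows of `mutate G V`: retained arrows; reversed degree-one arrows
`V → w`; arrows `V → r` moved to `w → r`; arrows `l → w` moved to `l → V`. -/
lemma mem_mutate_iff :
    (a, b, γ) ∈ (G.mutate V).arr ↔
      Retained G V a b (recolor G V a b γ) ∨ (a = V ∧ re G V (!γ) b) ∨
        (re G V (!γ) a ∧ (V, b, γ) ∈ G.arr) ∨
        (b = V ∧ ∃ w, re G V γ w ∧ (a, w, γ) ∈ G.arr) := by
  refine or_congr_left ⟨?_, fun h => ⟨_, h.1, h.2.1, h.2.2.1, h.2.2.2, ?_⟩⟩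
  · rintro ⟨d, hd, h2, h3, h4, hγ⟩
    obtain rfl : γ = recolor G V a b d := hγ
    rw [recolor_recolor]
    exact ⟨hd, h2, h3, h4⟩
  · exact recolor_recolor.symm

lemma mem_mutate_retained {d : Bool} (h : Retained G V a b d) :
    (a, b, recolor G V a b d) ∈ (G.mutate V).arr :=
  Or.inl ⟨d, h.1, h.2.1, h.2.2.1, h.2.2.2, rfl⟩

lemma mem_mutate_reverse (h : re G V (!γ) b) : (V, b, γ) ∈ (G.mutate V).arr :=
  Or.inr (Or.inl ⟨rfl, h⟩)

lemma mem_mutate_reattach_source (h : re G V (!γ) a) (h' : (V, b, γ) ∈ G.arr) :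
    (a, b, γ) ∈ (G.mutate V).arr :=
  Or.inr (Or.inr (Or.inl ⟨h, h'⟩))

lemma mem_mutate_reattach_target (h : re G V γ w) (h' : (a, w, γ) ∈ G.arr) :
    (a, V, γ) ∈ (G.mutate V).arr :=
  Or.inr (Or.inr (Or.inr ⟨rfl, w, h, h'⟩))

lemma deg_mutate_reverse (h : re G V (!γ) b) : (G.mutate V).deg (V, b, γ) = 1 := by
  dsimp only [mutate]
  rw [if_pos ⟨rfl, h⟩]

variable (hG : G.IsGGTree)
include hG

lemma deg_mutate_reattach_source (h : re G V (!γ) a) (h' : (V, b, γ) ∈ G.arr) :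
    (G.mutate V).deg (a, b, γ) = G.deg (V, b, γ) := by
  dsimp only [mutate]
  rw [if_neg (fun h'' => hG.ne_of_mem h.1 h''.1), if_pos ⟨h, h'⟩]

lemma deg_mutate_reattach_target (h : re G V γ w) (h' : (a, w, γ) ∈ G.arr) :
    (G.mutate V).deg (a, V, γ) = G.deg (a, w, γ) := by
  have hex : V = V ∧ ∃ w', re G V γ w' ∧ (a, w', γ) ∈ G.arr := ⟨rfl, w, h, h'⟩
  dsimp only [mutate]
  rw [if_neg (fun h'' => hG.no_loop _ _ h''.2.1), if_neg (fun h'' => hG.no_loop _ _ h''.2),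
    dif_pos hex, hG.in_unique V γ _ w hex.2.choose_spec.1.1 h.1]

lemma deg_mutate_retained_to (h : Retained G V a V γ) :
    (G.mutate V).deg (a, V, γ) = G.deg (a, V, γ) - 1 := by
  dsimp only [mutate]
  rw [if_neg (fun h' => hG.no_loop _ _ h'.2.1), if_neg (fun h' => hG.no_loop _ _ h'.2),
    dif_neg, if_neg (fun h' => not_flips_right hG h'.1), if_pos rfl]
  rintro ⟨-, w', hw', haw'⟩
  obtain rfl := hG.out_unique a γ V w' h.1 haw'
  exact hG.no_loop _ _ hw'.1

lemma deg_mutate_retained_from (h : Retained G V V b γ) :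
    (G.mutate V).deg (V, b, γ) = G.deg (V, b, γ) + 1 := by
  have hbV : b ≠ V := (hG.ne_of_mem h.1).symm
  dsimp only [mutate]
  rw [if_neg (fun h' => h.2.2.1 ⟨rfl, b, h'.2⟩), if_neg (fun h' => hG.no_loop _ _ h'.1.1),
    dif_neg (fun h' => hbV h'.1), if_neg (fun h' => not_flips_left hG h'.1), if_neg hbV,
    if_pos rfl]

lemma deg_mutate_retained_of_ne (ha : a ≠ V) (hb : b ≠ V)
    (h : Retained G V a b (recolor G V a b γ)) :
    (G.mutate V).deg (a, b, γ) = G.deg (a, b, recolor G V a b γ) := by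
  dsimp only [mutate]
  rw [if_neg (fun h' => ha h'.1), if_neg, dif_neg (fun h' => hb h'.1)]
  · by_cases hf : flips G V a b
    · rw [if_pos ⟨hf, by simpa [recolor_of_flips hf] using h.1⟩, recolor_of_flips hf]
    · rw [if_neg (fun h' => hf h'.1), if_neg hb, if_neg ha, recolor_of_not_flips hf]
  · rintro ⟨hre, -⟩
    have hf := (h.flips_iff_left hG).mpr (.of_re hre)
    rw [recolor_of_flips hf] at h
    exact hb (hG.out_unique a _ b V h.1 hre.1)

end MutateArrows

section IsGGTreeMutate

variable {G : GCQuiver n} {V : Fin n}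

section Exclusions

variable (hG : G.IsGGTree) {u v a b w : Fin n} {γ : Bool}
include hG

lemma Retained.target_eq {b' : Fin n} (h : Retained G V u b (recolor G V u b γ))
    (h' : Retained G V u b' (recolor G V u b' γ)) : b = b' := by
  rw [recolor_eq_recolor ((h'.flips_iff_left hG).trans (h.flips_iff_left hG).symm)] at h'
  exact hG.out_unique _ _ _ _ h.1 h'.1

lemma Retained.source_eq {a' : Fin n} (h : Retained G V a v (recolor G V a v γ))
    (h' : Retained G V a' v (recolor G V a' v γ)) : a = a' := by
  rw [recolor_eq_recolor ((h'.flips_iff_right hG).trans (h.flips_iff_right hG).symm)] at h'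
  exact hG.in_unique _ _ _ _ h.1 h'.1

lemma Retained.not_re_source (h : Retained G V u b (recolor G V u b γ)) :
    ¬re G V (!γ) u := fun hre => by
  rw [recolor_of_flips ((h.flips_iff_left hG).mpr (.of_re hre))] at h
  exact h.2.1 ⟨hG.out_unique _ _ _ _ h.1 hre.1, hre⟩

lemma Retained.not_re_target (h : Retained G V a v (recolor G V a v γ)) :
    ¬re G V (!γ) v := fun hre => by
  rw [recolor_of_flips ((h.flips_iff_right hG).mpr (.of_re hre))] at h
  exact h.2.2.2 ⟨v, hre, rfl⟩

lemma Retained.not_mem_of_re (h : Retained G V u b (recolor G V u b γ))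
    (hre : re G V γ w) : (u, w, γ) ∉ G.arr := fun huw => by
  rw [recolor_of_not_flips (fun hf => not_inSwapRegion_of_mem_of_re hG hre huw
    ((h.flips_iff_left hG).mp hf))] at h
  exact h.2.2.2 ⟨w, hre, hG.out_unique _ _ _ _ h.1 huw⟩

lemma Retained.not_mem_from_V (h : Retained G V a v (recolor G V a v γ))
    (hre : re G V (!γ) w) : (V, v, γ) ∉ G.arr := fun hVv => by
  rw [recolor_of_not_flips (fun hf => not_inSwapRegion_of_mem_from_V hG hVv
    ((h.flips_iff_right hG).mp hf))] at h
  exact h.2.2.1 ⟨hG.in_unique _ _ _ _ h.1 hVv, w, hre⟩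

lemma Retained.not_re_of_to_V (h : Retained G V a V (recolor G V a V γ)) :
    ¬re G V γ w := fun hre => by
  rw [recolor_of_not_flips (not_flips_right hG)] at h
  obtain rfl := hG.in_unique _ _ _ _ h.1 hre.1
  exact h.2.1 ⟨rfl, hre⟩

lemma Retained.not_re_of_from_V (h : Retained G V V b (recolor G V V b γ)) :
    ¬re G V (!γ) w := fun hre => by
  rw [recolor_of_not_flips (not_flips_left hG)] at h
  exact h.2.2.1 ⟨rfl, w, hre⟩

lemma not_mem_of_re_of_re (hu : re G V (!γ) u) (hw : re G V γ w) : (u, w, γ) ∉ G.arr :=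
    fun huw => by
  refine hG.tree.isAcyclic.not_adj_of_adj_of_adj (hG.adj_of_mem hu.1).symm
    (hG.adj_of_mem hw.1).symm ?_ (hG.adj_of_mem huw)
  rintro rfl
  simpa using hG.color_eq hu.1 hw.1

end Exclusions

open Classical in
/-- The arrow of `mutate G V` that an arrow `e` of `G` turns into. -/
noncomputable def mutateArrow (G : GCQuiver n) (V : Fin n) (e : Fin n × Fin n × Bool) :
    Fin n × Fin n × Bool :=
  if e.2.1 = V ∧ re G V e.2.2 e.1 then (V, e.1, !e.2.2)
  else if h : e.1 = V ∧ ∃ w, re G V (!e.2.2) w then (h.2.choose, e.2.1, e.2.2)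
  else if ∃ w, re G V e.2.2 w ∧ e.2.1 = w then (e.1, V, e.2.2)
  else (e.1, e.2.1, recolor G V e.1 e.2.1 e.2.2)

section Mutate

variable (hG : G.IsGGTree)
include hG

lemma mutate_no_loop (i : Fin n) (c : Bool) : (i, i, c) ∉ (G.mutate V).arr := fun h => by
  rcases mem_mutate_iff.mp h with h | ⟨rfl, h⟩ | ⟨h, h'⟩ | ⟨rfl, w, h, h'⟩
  · exact hG.no_loop _ _ h.1
  · exact hG.no_loop _ _ h.1
  · exact hG.not_mem_swap h.1 h'
  · exact hG.not_mem_swap h.1 h'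

lemma adj_mutate_of_mem {a b : Fin n} {γ : Bool} (h : (a, b, γ) ∈ (G.mutate V).arr) :
    (G.mutate V).adj.Adj a b :=
  ⟨fun hab => mutate_no_loop hG b γ (hab ▸ h), γ, Or.inl h⟩

lemma mutate_deg_pos : ∀ e ∈ (G.mutate V).arr, 1 ≤ (G.mutate V).deg e := by
  rintro ⟨a, b, γ⟩ h
  rcases mem_mutate_iff.mp h with h | ⟨rfl, h⟩ | ⟨h, h'⟩ | ⟨rfl, w, h, h'⟩
  · by_cases hb : b = V
    · subst hb
      rw [recolor_of_not_flips (not_flips_right hG)] at h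
      have := hG.deg_pos _ h.1
      have : G.deg (a, b, γ) ≠ 1 := fun h1 => h.2.1 ⟨rfl, h.1, h1⟩
      rw [deg_mutate_retained_to hG h]
      omega
    by_cases ha : a = V
    · subst ha
      rw [recolor_of_not_flips (not_flips_left hG)] at h
      rw [deg_mutate_retained_from hG h]
      omega
    rw [deg_mutate_retained_of_ne hG ha hb h]
    exact hG.deg_pos _ h.1
  · rw [deg_mutate_reverse h]
  · rw [deg_mutate_reattach_source hG h h']
    exact hG.deg_pos _ h'
  · rw [deg_mutate_reattach_target hG h h']
    exact hG.deg_pos _ h'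

lemma mutate_out_unique (u : Fin n) (γ : Bool) (b b' : Fin n)
    (h : (u, b, γ) ∈ (G.mutate V).arr) (h' : (u, b', γ) ∈ (G.mutate V).arr) : b = b' := by
  rcases mem_mutate_iff.mp h with h | ⟨rfl, h⟩ | ⟨h, hb⟩ | ⟨rfl, w, h, hu⟩ <;>
    rcases mem_mutate_iff.mp h' with h' | ⟨hu', h'⟩ | ⟨h', hb'⟩ | ⟨rfl, w', h', hu'⟩
  · exact h.target_eq hG h'
  · subst hu'
    exact (h.not_re_of_from_V hG h').elim
  · exact (h.not_re_source hG h').elim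
  · exact (h.not_mem_of_re hG h' hu').elim
  · exact (h'.not_re_of_from_V hG h).elim
  · exact hG.in_unique _ _ _ _ h.1 h'.1
  · exact (hG.no_loop _ _ h'.1).elim
  · exact (hG.not_mem_swap h'.1 hu').elim
  · exact (h'.not_re_source hG h).elim
  · exact (hG.no_loop _ _ (hu' ▸ h.1)).elim
  · exact hG.out_unique _ _ _ _ hb hb'
  · exact (not_mem_of_re_of_re hG h h' hu').elim
  · exact (h'.not_mem_of_re hG h hu).elim
  · exact (hG.not_mem_swap h.1 (hu' ▸ hu)).elim
  · exact (not_mem_of_re_of_re hG h' h hu).elim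
  · rfl

lemma mutate_in_unique (v : Fin n) (γ : Bool) (a a' : Fin n)
    (h : (a, v, γ) ∈ (G.mutate V).arr) (h' : (a', v, γ) ∈ (G.mutate V).arr) : a = a' := by
  rcases mem_mutate_iff.mp h with h | ⟨rfl, h⟩ | ⟨h, hv⟩ | ⟨rfl, w, h, ha⟩ <;>
    rcases mem_mutate_iff.mp h' with h' | ⟨rfl, h'⟩ | ⟨h', hv'⟩ | ⟨hv', w', h', ha'⟩
  · exact h.source_eq hG h'
  · exact (h.not_re_target hG h').elim
  · exact (h.not_mem_from_V hG h' hv').elim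
  · subst hv'
    exact (h.not_re_of_to_V hG h').elim
  · exact (h'.not_re_target hG h).elim
  · rfl
  · exact (hG.not_mem_swap h.1 hv').elim
  · exact (hG.no_loop _ _ (hv' ▸ h.1)).elim
  · exact (h'.not_mem_from_V hG h hv).elim
  · exact (hG.not_mem_swap h'.1 hv).elim
  · exact hG.in_unique _ _ _ _ h.1 h'.1
  · exact (hG.no_loop _ _ (hv' ▸ hv)).elim
  · exact (h'.not_re_of_to_V hG h).elim
  · exact (hG.no_loop _ _ h'.1).elim
  · exact (hG.no_loop _ _ hv').elim
  · obtain rfl := hG.in_unique _ _ _ _ h.1 h'.1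
    exact hG.in_unique _ _ _ _ ha ha'


lemma mutate_arr_subset_image : (G.mutate V).arr ⊆ mutateArrow G V '' G.arr := by
  rintro ⟨a, b, γ⟩ h
  rcases mem_mutate_iff.mp h with h | ⟨rfl, h⟩ | ⟨h, h'⟩ | ⟨hb, w, h, h'⟩
  · refine ⟨_, h.1, ?_⟩
    simp only [mutateArrow, if_neg h.2.1, dif_neg h.2.2.1, if_neg h.2.2.2, recolor_recolor]
  · refine ⟨_, h.1, ?_⟩
    simp [mutateArrow, h]
  · have h1 : ¬(b = V ∧ re G V γ V) := fun h'' => hG.no_loop _ _ h''.2.1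
    have hex : V = V ∧ ∃ w, re G V (!γ) w := ⟨rfl, a, h⟩
    refine ⟨_, h', ?_⟩
    simp only [mutateArrow, if_neg h1, dif_pos hex,
      hG.in_unique V _ _ a hex.2.choose_spec.1 h.1]
  · rw [hb]
    refine ⟨_, h', ?_⟩
    have h2 : ¬(a = V ∧ ∃ w, re G V (!γ) w) := fun h'' => hG.not_mem_swap h.1 (h''.1 ▸ h')
    have h1 : ¬(w = V ∧ re G V γ a) := fun h'' => hG.ne_of_mem h.1 h''.1
    have h3 : ∃ w', re G V γ w' ∧ w = w' := ⟨w, h, rfl⟩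
    simp only [mutateArrow, if_neg h1, dif_neg h2, if_pos h3]

lemma reachable_mutate_of_mem {x y : Fin n} {c : Bool} (h : (x, y, c) ∈ G.arr) :
    (G.mutate V).adj.Reachable x y := by
  by_cases h1 : y = V ∧ re G V c x
  · obtain ⟨rfl, hre⟩ := h1
    exact (adj_mutate_of_mem hG
      (mem_mutate_reverse (γ := !c) (by simpa using hre))).symm.reachable
  by_cases h2 : x = V ∧ ∃ w, re G V (!c) w
  · obtain ⟨rfl, w, hw⟩ := h2
    exact (adj_mutate_of_mem hG (mem_mutate_reverse hw)).reachable.trans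
      (adj_mutate_of_mem hG (mem_mutate_reattach_source hw h)).reachable
  by_cases h3 : ∃ w, re G V c w ∧ y = w
  · obtain ⟨w, hw, rfl⟩ := h3
    exact (adj_mutate_of_mem hG (mem_mutate_reattach_target hw h)).reachable.trans
      (adj_mutate_of_mem hG (mem_mutate_reverse (γ := !c) (by simpa using hw))).reachable
  exact (adj_mutate_of_mem hG (mem_mutate_retained ⟨h, h1, h2, h3⟩)).reachable

lemma mutate_isTree_and_ncard :
    (G.mutate V).adj.IsTree ∧ (G.mutate V).arr.ncard = n - 1 := by
  have hconn : (G.mutate V).adj.Connected := hG.tree.connected.of_adj_reachable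
    fun _ _ ⟨_, _, h⟩ =>
      h.elim (reachable_mutate_of_mem hG) (reachable_mutate_of_mem hG · |>.symm)
  have harr : (G.mutate V).arr.ncard ≤ n - 1 := hG.card_arr ▸
    (Set.ncard_le_ncard (mutate_arr_subset_image hG) (G.arr.toFinite.image _)).trans
      (Set.ncard_image_le G.arr.toFinite)
  have hedge : (G.mutate V).adj.edgeSet.ncard ≤ (G.mutate V).arr.ncard := by
    rw [edgeSet_adj_eq_image (mutate_no_loop hG)]
    exact Set.ncard_image_le (Set.toFinite _)
  have hn : 0 < n := V.pos
  have htree := hconn.isTree_of_ncard_edgeSet_le (by rw [Nat.card_fin]; omega)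
  have := (isTree_iff_connected_and_ncard.mp htree).2
  rw [Nat.card_fin] at this
  exact ⟨htree, by omega⟩

lemma IsGGTree.mutate : (G.mutate V).IsGGTree :=
  ⟨mutate_no_loop hG, (mutate_isTree_and_ncard hG).1, (mutate_isTree_and_ncard hG).2,
    mutate_out_unique hG, mutate_in_unique hG, mutate_deg_pos hG⟩

end Mutate

end IsGGTreeMutate

section RevMutate

variable {G : GCQuiver n} {V w : Fin n} {c : Bool} (hG : G.IsGGTree)
include hG

lemma re_rev_mutate_iff {γ : Bool} {u : Fin n} :
    re (G.mutate V).rev V γ u ↔ re G V (!γ) u := by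
  refine ⟨fun ⟨h, hdeg⟩ => ?_, fun h => ⟨mem_mutate_reverse h, deg_mutate_reverse h⟩⟩
  change (V, u, γ) ∈ (G.mutate V).arr at h
  change (G.mutate V).deg (V, u, γ) = 1 at hdeg
  rcases mem_mutate_iff.mp h with h | ⟨-, h⟩ | ⟨h, -⟩ | ⟨rfl, w, h, h'⟩
  · rw [recolor_of_not_flips (not_flips_left hG)] at h
    rw [deg_mutate_retained_from hG h] at hdeg
    exact absurd hdeg (by have := hG.deg_pos _ h.1; omega)
  · exact h
  · exact (hG.no_loop _ _ h.1).elim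
  · exact (hG.not_mem_swap h.1 h').elim

lemma mutate_not_mem_of_mem_swapRegion (hre : re G V c w) {z : Fin n}
    (hz : z ∈ swapRegion G V w c) : (w, z, !c) ∉ (G.mutate V).arr := fun h => by
  rcases mem_mutate_iff.mp h with h | ⟨hw, -⟩ | ⟨-, h⟩ | ⟨rfl, -⟩
  · exact h.not_re_source hG (by simpa using hre)
  · exact hG.ne_of_mem hre.1 hw
  · exact not_inSwapRegion_of_mem_from_V hG h ⟨c, w, hre, hz⟩
  · exact ne_of_mem_swapRegion hG hre hz rfl

lemma mem_swapRegion_of_mutate_arrow_out (hre : re G V c w) {x y : Fin n} {d : Bool}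
    (hx : x ∈ swapRegion G V w c) (h : (x, y, d) ∈ (G.mutate V).arr)
    (hd : ¬((x, y, !c) ∈ (G.mutate V).arr ∧ x = w)) : y ∈ swapRegion G V w c := by
  rcases mem_mutate_iff.mp h with h' | ⟨rfl, -⟩ | ⟨h', -⟩ | ⟨-, w', h', hxw'⟩
  · exact (h'.mem_swapRegion_iff hG hre).mp hx
  · exact (ne_of_mem_swapRegion hG hre hx rfl).elim
  · obtain ⟨rfl, rfl⟩ := eq_of_mem_swapRegion hG hre h' hx Relation.ReflTransGen.refl
    exact (hd ⟨by simpa using h, rfl⟩).elim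
  · exact (not_inSwapRegion_of_mem_of_re hG h' hxw' ⟨c, w, hre, hx⟩).elim

lemma mem_swapRegion_of_mutate_arrow_in (hre : re G V c w) {x y : Fin n} {d : Bool}
    (hx : x ∈ swapRegion G V w c) (h : (y, x, d) ∈ (G.mutate V).arr)
    (hd : ¬(x = w ∧ y = V)) : y ∈ swapRegion G V w c := by
  rcases mem_mutate_iff.mp h with h' | ⟨rfl, h'⟩ | ⟨-, h'⟩ | ⟨rfl, -⟩
  · exact (h'.mem_swapRegion_iff hG hre).mpr hx
  · obtain ⟨-, rfl⟩ := eq_of_mem_swapRegion hG hre h' hx Relation.ReflTransGen.refl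
    exact (hd ⟨rfl, rfl⟩).elim
  · exact (not_inSwapRegion_of_mem_from_V hG h' ⟨c, w, hre, hx⟩).elim
  · exact (ne_of_mem_swapRegion hG hre hx rfl).elim

lemma retained_of_adjAvoid (hre : re G V c w) {a b : Fin n} {d : Bool}
    (ha : a ∈ swapRegion G V w c) (hb : b ∈ swapRegion G V w c) (h : (a, b, d) ∈ G.arr)
    (hab : ¬((a, b, c) ∈ G.arr ∧ b = w)) : Retained G V a b d := by
  refine ⟨h, fun h' => ne_of_mem_swapRegion hG hre hb h'.1,
    fun h' => ne_of_mem_swapRegion hG hre ha h'.1, ?_⟩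
  rintro ⟨w', hw', rfl⟩
  obtain ⟨rfl, rfl⟩ := eq_of_mem_swapRegion hG hre hw' hb Relation.ReflTransGen.refl
  exact hab ⟨h, rfl⟩

lemma mem_mutate_of_adjAvoid (hre : re G V c w) {a b : Fin n} {d : Bool}
    (ha : a ∈ swapRegion G V w c) (hb : b ∈ swapRegion G V w c) (h : (a, b, d) ∈ G.arr)
    (hab : ¬((a, b, c) ∈ G.arr ∧ b = w)) : (a, b, !d) ∈ (G.mutate V).arr := by
  have := mem_mutate_retained (retained_of_adjAvoid hG hre ha hb h hab)
  rwa [recolor_of_flips ⟨c, w, hre, ha, hb⟩] at this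

lemma swapRegion_rev_mutate (hre : re G V c w) :
    swapRegion (G.mutate V).rev V w (!c) = swapRegion G V w c := by
  refine Set.Subset.antisymm (fun u hu => ?_) (fun u hu => ?_)
  · induction mem_swapRegion_iff.mp hu with
    | refl => exact Relation.ReflTransGen.refl
    | tail _ hxy ih =>
      obtain ⟨⟨d, hd | hd⟩, h2, -, -, h5⟩ := hxy
      · exact mem_swapRegion_of_mutate_arrow_in hG hre (ih ‹_›) hd h2
      · exact mem_swapRegion_of_mutate_arrow_out hG hre (ih ‹_›) hd h5
  · induction mem_swapRegion_iff.mp hu with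
    | refl => exact Relation.ReflTransGen.refl
    | @tail x y hx hxy ih =>
      have hy : y ∈ swapRegion G V w c := hx.tail hxy
      obtain ⟨hxy, -, -, h4, h5⟩ := hxy
      refine (ih hx).tail ⟨?_, fun h => ne_of_mem_swapRegion hG hre hy h.2,
        fun h => ne_of_mem_swapRegion hG hre hx h.1,
        fun h => mutate_not_mem_of_mem_swapRegion hG hre hx (h.2 ▸ h.1),
        fun h => mutate_not_mem_of_mem_swapRegion hG hre hy (h.2 ▸ h.1)⟩
      obtain ⟨d, hd | hd⟩ := hxy
      exacts [⟨!d, Or.inr (mem_mutate_of_adjAvoid hG hre hx hy hd h4)⟩,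
        ⟨!d, Or.inl (mem_mutate_of_adjAvoid hG hre hy hx hd h5)⟩]

lemma inSwapRegion_rev_mutate_iff {u : Fin n} :
    InSwapRegion (G.mutate V).rev V u ↔ InSwapRegion G V u := by
  constructor
  · rintro ⟨γ, w, hre, hu⟩
    have hre' := (re_rev_mutate_iff hG).mp hre
    rw [← Bool.not_not γ, swapRegion_rev_mutate hG hre'] at hu
    exact ⟨_, w, hre', hu⟩
  · rintro ⟨c, w, hre, hu⟩
    rw [← swapRegion_rev_mutate hG hre] at hu
    exact ⟨_, w, (re_rev_mutate_iff hG).mpr (by simpa using hre), hu⟩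

end RevMutate

section Roundtrip

variable {G : GCQuiver n} {V x y : Fin n} {δ : Bool} (hG : G.IsGGTree)
include hG

lemma Retained.retained_rev_mutate (h : Retained G V x y δ) :
    Retained (G.mutate V).rev V y x (recolor G V x y δ) := by
  have h' : Retained G V x y (recolor G V x y (recolor G V x y δ)) := by rwa [recolor_recolor]
  refine ⟨mem_mutate_retained h, fun ⟨hx, hre⟩ => ?_, fun ⟨hy, w, hre⟩ => ?_, ?_⟩
  · subst hx
    exact h'.not_re_of_from_V hG ((re_rev_mutate_iff hG).mp hre)
  · subst hy
    exact h'.not_re_of_to_V hG (by simpa using (re_rev_mutate_iff hG).mp hre)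
  · rintro ⟨w, hre, rfl⟩
    exact h'.not_re_source hG ((re_rev_mutate_iff hG).mp hre)

lemma Retained.flips_rev_mutate_iff (h : Retained G V x y δ) :
    flips (G.mutate V).rev V y x ↔ flips G V x y := by
  rw [(h.retained_rev_mutate hG).flips_iff_left hG.mutate.rev, inSwapRegion_rev_mutate_iff hG,
    h.flips_iff_right hG]

lemma Retained.mem_mutate_rev_mutate (h : Retained G V x y δ) :
    (y, x, δ) ∈ ((G.mutate V).rev.mutate V).arr := by
  have := mem_mutate_retained (h.retained_rev_mutate hG)
  rwa [recolor_eq_recolor (h.flips_rev_mutate_iff hG), recolor_recolor] at this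

lemma Retained.deg_mutate_rev_mutate (h : Retained G V x y δ) :
    ((G.mutate V).rev.mutate V).deg (y, x, δ) = G.deg (x, y, δ) := by
  have hH := h.retained_rev_mutate hG
  have hpos := hG.deg_pos _ h.1
  by_cases hy : y = V
  · subst hy
    rw [recolor_of_not_flips (not_flips_right hG)] at hH
    have hne : G.deg (x, y, δ) ≠ 1 := fun h1 => h.2.1 ⟨rfl, h.1, h1⟩
    rw [deg_mutate_retained_from hG.mutate.rev hH]
    change (G.mutate y).deg (x, y, δ) + 1 = _
    rw [deg_mutate_retained_to hG h]
    omega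
  by_cases hx : x = V
  · subst hx
    rw [recolor_of_not_flips (not_flips_left hG)] at hH
    rw [deg_mutate_retained_to hG.mutate.rev hH]
    change (G.mutate x).deg (x, y, δ) - 1 = _
    rw [deg_mutate_retained_from hG h]
    omega
  have h' : Retained G V x y (recolor G V x y (recolor G V x y δ)) := by rwa [recolor_recolor]
  have hrec : recolor (G.mutate V).rev V y x δ = recolor G V x y δ :=
    recolor_eq_recolor (h.flips_rev_mutate_iff hG)
  rw [← hrec] at hH
  rw [deg_mutate_retained_of_ne hG.mutate.rev hy hx hH, hrec]
  change (G.mutate V).deg (x, y, recolor G V x y δ) = _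
  rw [deg_mutate_retained_of_ne hG hx hy h', recolor_recolor]

lemma mutate_rev_mutate_of_mem (h : (x, y, δ) ∈ G.arr) :
    (y, x, δ) ∈ ((G.mutate V).rev.mutate V).arr ∧
      ((G.mutate V).rev.mutate V).deg (y, x, δ) = G.deg (x, y, δ) := by
  have hH : (G.mutate V).rev.IsGGTree := hG.mutate.rev
  by_cases h1 : y = V ∧ re G V δ x
  · obtain ⟨hy, hre⟩ := h1
    have hre' : re (G.mutate V).rev V (!δ) x := (re_rev_mutate_iff hG).mpr (by simpa using hre)
    rw [hy]
    exact ⟨mem_mutate_reverse hre', (deg_mutate_reverse hre').trans hre.2.symm⟩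
  by_cases h2 : x = V ∧ ∃ w, re G V (!δ) w
  · obtain ⟨hx, w, hre⟩ := h2
    rw [hx] at h ⊢
    have hre' : re (G.mutate V).rev V δ w := (re_rev_mutate_iff hG).mpr hre
    have hmem : (y, w, δ) ∈ (G.mutate V).rev.arr := mem_mutate_reattach_source hre h
    exact ⟨mem_mutate_reattach_target hre' hmem,
      (deg_mutate_reattach_target hH hre' hmem).trans (deg_mutate_reattach_source hG hre h)⟩
  by_cases h3 : ∃ w, re G V δ w ∧ y = w
  · obtain ⟨w, hre, rfl⟩ := h3
    have hre' : re (G.mutate V).rev V (!δ) y := (re_rev_mutate_iff hG).mpr (by simpa using hre)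
    have hmem : (V, x, δ) ∈ (G.mutate V).rev.arr := mem_mutate_reattach_target hre h
    exact ⟨mem_mutate_reattach_source hre' hmem,
      (deg_mutate_reattach_source hH hre' hmem).trans (deg_mutate_reattach_target hG hre h)⟩
  have hR : Retained G V x y δ := ⟨h, h1, h2, h3⟩
  exact ⟨hR.mem_mutate_rev_mutate hG, hR.deg_mutate_rev_mutate hG⟩

theorem IsGGTree.mutate_rev_mutate_same : ((G.mutate V).rev.mutate V).Same G.rev := by
  have hsub : G.rev.arr ⊆ ((G.mutate V).rev.mutate V).arr :=
    fun _ h => (mutate_rev_mutate_of_mem hG h).1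
  have heq := Set.eq_of_subset_of_ncard_le hsub
    (by rw [hG.rev.card_arr, hG.mutate.rev.mutate.card_arr])
  exact ⟨heq.symm, fun _ h => (mutate_rev_mutate_of_mem hG (heq ▸ h :)).2⟩

end Roundtrip

namespace Same

variable {H K : GCQuiver n} {V : Fin n} (hs : H.Same K)
include hs

lemma adj_eq : H.adj = K.adj := by
  ext i j
  simp only [adj, hs.1]

lemma isGGTree (hH : H.IsGGTree) : K.IsGGTree where
  no_loop i c := hs.1 ▸ hH.no_loop i c
  tree := hs.adj_eq ▸ hH.tree
  card_arr := hs.1 ▸ hH.card_arr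
  out_unique := hs.1 ▸ hH.out_unique
  in_unique := hs.1 ▸ hH.in_unique
  deg_pos e he := hs.2 e (hs.1 ▸ he) ▸ hH.deg_pos e (hs.1 ▸ he)

lemma re_eq : re H V = re K V := by
  ext c w
  constructor <;> rintro ⟨h, hdeg⟩
  · exact ⟨hs.1 ▸ h, hs.2 _ h ▸ hdeg⟩
  · exact ⟨hs.1 ▸ h, (hs.2 _ (hs.1 ▸ h)).symm ▸ hdeg⟩

lemma flips_eq : flips H V = flips K V := by
  have hadj : adjAvoid H V = adjAvoid K V := by
    ext
    simp only [adjAvoid, hs.1]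
  ext a b
  simp only [flips, swapRegion, hs.re_eq, hadj]

lemma retained_eq : Retained H V = Retained K V := by
  ext
  simp only [Retained, hs.re_eq, hs.1]

lemma recolor_eq : recolor H V = recolor K V := by
  ext a b γ
  exact recolor_eq_recolor (by rw [hs.flips_eq])

lemma mutate_arr : (H.mutate V).arr = (K.mutate V).arr := by
  ext ⟨a, b, γ⟩
  simp only [mem_mutate_iff, hs.retained_eq, hs.recolor_eq, hs.re_eq, hs.1]

lemma deg_mutate_retained (hH : H.IsGGTree) {a b : Fin n} {γ : Bool}
    (h : Retained H V a b (recolor H V a b γ)) :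
    (H.mutate V).deg (a, b, γ) = (K.mutate V).deg (a, b, γ) := by
  have hK := hs.isGGTree hH
  have h' : Retained K V a b (recolor K V a b γ) := by rwa [← hs.retained_eq, ← hs.recolor_eq]
  by_cases hb : b = V
  · subst hb
    rw [recolor_of_not_flips (not_flips_right hH)] at h
    rw [recolor_of_not_flips (not_flips_right hK)] at h'
    rw [deg_mutate_retained_to hH h, deg_mutate_retained_to hK h', hs.2 _ h.1]
  by_cases ha : a = V
  · subst ha
    rw [recolor_of_not_flips (not_flips_left hH)] at h
    rw [recolor_of_not_flips (not_flips_left hK)] at h'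
    rw [deg_mutate_retained_from hH h, deg_mutate_retained_from hK h', hs.2 _ h.1]
  rw [deg_mutate_retained_of_ne hH ha hb h, deg_mutate_retained_of_ne hK ha hb h', hs.2 _ h.1,
    hs.recolor_eq]

lemma mutate (hH : H.IsGGTree) : (H.mutate V).Same (K.mutate V) := by
  have hK := hs.isGGTree hH
  refine ⟨hs.mutate_arr, ?_⟩
  rintro ⟨a, b, γ⟩ h
  rcases mem_mutate_iff.mp h with h | ⟨rfl, h⟩ | ⟨h, h'⟩ | ⟨hb, w, h, h'⟩
  · exact hs.deg_mutate_retained hH h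
  · rw [deg_mutate_reverse h, deg_mutate_reverse (hs.re_eq ▸ h)]
  · rw [deg_mutate_reattach_source hH h h',
      deg_mutate_reattach_source hK (hs.re_eq ▸ h) (hs.1 ▸ h'), hs.2 _ h']
  · rw [hb, deg_mutate_reattach_target hH h h',
      deg_mutate_reattach_target hK (hs.re_eq ▸ h) (hs.1 ▸ h'), hs.2 _ h']

end Same

lemma IsGGTree.same_rev_mutate_rev {G G' : GCQuiver n} {V : Fin n} (hG' : G'.IsGGTree)
    (hs : (G'.mutate V).Same G) : G'.Same (G.rev.mutate V).rev := by
  have := (hs.rev.mutate hG'.mutate.rev).symm.trans hG'.mutate_rev_mutate_same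
  simpa using this.symm.rev

end GCQuiver

/-- **Statement 4.** The set of graded gentle trees with `n` vertices is closed under
forward and backward mutation: for any graded gentle tree `G` with `n` vertices and any
vertex `V`, the forward mutation `μ_V G` is again a graded gentle tree with `n` vertices,
and the backward mutation `μ_V⁻¹ G` exists, is unique (as a graded gentle tree, up to
the irrelevant values of the degree function away from the arrows), and is again a
graded gentle tree with `n` vertices. -/
theorem ggtree_closed_under_mutation (n : ℕ) (G : GCQuiver n) (hG : G.IsGGTree)
    (V : Fin n) :
    (G.mutate V).IsGGTree ∧
    (∃ G' : GCQuiver n, G'.IsGGTree ∧ (G'.mutate V).Same G) ∧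
    (∀ G' G'' : GCQuiver n, G'.IsGGTree → G''.IsGGTree →
      (G'.mutate V).Same G → (G''.mutate V).Same G → G'.Same G'') := by
  refine ⟨hG.mutate, ⟨(G.rev.mutate V).rev, hG.rev.mutate.rev, ?_⟩,
    fun G' G'' hG' hG'' hs' hs'' => ?_⟩
  · simpa using hG.rev.mutate_rev_mutate_same
  · exact (hG'.same_rev_mutate_rev hs').trans (hG''.same_rev_mutate_rev hs'').symm
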